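/- Let K be a compact Hausdorff space. Then C(K) has the perfect Daugavet property if and only if K has no G_δ-points. Moreover, if K has no G_δ-points, then C(K) has the n-perfect Daugavet property for every natural number n. -/

import Mathlib

universe u

/-- A slice of the closed unit ball of `X`. -/
def ballSlice {X : Type u} [NormedAddCommGroup X] [NormedSpace ℝ X]
    (f : X →L[ℝ] ℝ) (a : ℝ) : Set X :=
  {x | ‖x‖ ≤ 1 ∧ ‖f‖ - a < f x}

/-- `X` has the `κ`-perfect Daugavet property. -/
def HasKPerfectDaugavet (X : Type u) [NormedAddCommGroup X] [NormedSpace ℝ X]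
    (κ : Cardinal.{u}) : Prop :=
  ∀ Y : Set X, Cardinal.mk Y ≤ κ → (∀ y ∈ Y, ‖y‖ = 1) →
    ∀ (f : X →L[ℝ] ℝ) (a : ℝ), 0 < a →
      ∃ x ∈ ballSlice f a, ∀ y ∈ Y, ‖y + x‖ = 2

/-!
If `x₀` is a `G_δ`-point, Urysohn gives `y ≥ 0` with `y⁻¹{1} = {x₀}`, and no `x` in the slice
`{x | x x₀ < 1}` has `‖y + x‖ = 2`: the norm would be attained at a point where `y = x = 1`.

Conversely, without `G_δ`-points the peak set `{|y| = 1}` of a unit vector `y`, a nonempty `G_δ`,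
is infinite. A point `x₀` of a slice of `f` is then bent towards `y` near one of `N` peak points by
disjoint bumps `φₜ`: every signed sum of the perturbations `φₜ (y - x₀)` has norm `≤ 2`, so one of
them changes `f` by at most `2‖f‖/N`. Doing this for `y₁, …, yₙ` in turn, keeping the points
already used fixed, yields `x` in the slice with `x tᵢ = yᵢ tᵢ`, hence `‖yᵢ + x‖ = 2`.
-/

open Set Function

theorem ballSlice_nonempty {X : Type*} [NormedAddCommGroup X] [NormedSpace ℝ X]
    (f : X →L[ℝ] ℝ) {a : ℝ} (ha : 0 < a) : (ballSlice f a).Nonempty := by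
  obtain ⟨x, hx, hfx⟩ := f.exists_lt_apply_of_lt_opNorm (sub_lt_self ‖f‖ ha)
  rw [Real.norm_eq_abs] at hfx
  rcases le_or_gt 0 (f x) with h | h
  · exact ⟨x, hx.le, by rwa [abs_of_nonneg h] at hfx⟩
  · exact ⟨-x, by simpa using hx.le, by rwa [map_neg, ← abs_of_neg h]⟩

theorem exists_abs_apply_le_mul_div_card {E ι : Type*} [NormedAddCommGroup E]
    [NormedSpace ℝ E] (f : E →L[ℝ] ℝ) {s : Finset ι} (hs : s.Nonempty) (g : ι → E) {C : ℝ}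
    (hC : ∀ ε : ι → ℝ, (∀ i, |ε i| = 1) → ‖∑ i ∈ s, ε i • g i‖ ≤ C) :
    ∃ i ∈ s, |f (g i)| ≤ ‖f‖ * C / s.card := by
  set ε : ι → ℝ := fun i => if 0 ≤ f (g i) then 1 else -1
  have hε : ∀ i, |ε i| = 1 := fun i => by by_cases h : 0 ≤ f (g i) <;> simp [ε, h]
  have hsum : ∑ i ∈ s, |f (g i)| = f (∑ i ∈ s, ε i • g i) := by
    simp only [map_sum, map_smul, smul_eq_mul]
    refine Finset.sum_congr rfl fun i _ => ?_
    by_cases h : 0 ≤ f (g i)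
    · simp [ε, h, abs_of_nonneg h]
    · simp [ε, h, abs_of_neg (not_le.1 h)]
  have hcard : (0 : ℝ) < s.card := by exact_mod_cast hs.card_pos
  refine Finset.exists_le_of_sum_le hs ?_
  rw [Finset.sum_const, nsmul_eq_mul, mul_div_cancel₀ _ hcard.ne', hsum]
  calc f (∑ i ∈ s, ε i • g i) ≤ ‖f (∑ i ∈ s, ε i • g i)‖ := Real.le_norm_self _
    _ ≤ ‖f‖ * ‖∑ i ∈ s, ε i • g i‖ := f.le_opNorm _
    _ ≤ ‖f‖ * C := by gcongr; exact hC ε hε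

theorem IsGδ.infinite_of_forall_not_isGδ_singleton {X : Type*} [TopologicalSpace X] [T1Space X]
    (hX : ∀ x : X, ¬IsGδ ({x} : Set X)) {S : Set X} (hS : IsGδ S) (hne : S.Nonempty) :
    S.Infinite := by
  intro hfin
  obtain ⟨x, hx⟩ := hne
  have hx_eq : ({x} : Set X) = S ∩ (S \ {x})ᶜ := by
    ext y
    by_cases hy : y = x <;> simp_all
  exact hX x (hx_eq ▸ hS.inter (hfin.subset sdiff_subset).isClosed.isOpen_compl.isGδ)

theorem exists_bump_support_subset {X : Type*} [TopologicalSpace X] [NormalSpace X] [T1Space X]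
    {V : Set X} (hV : IsOpen V) {x : X} (hx : x ∈ V) :
    ∃ φ : C(X, ℝ), φ x = 1 ∧ (∀ y, φ y ∈ Icc (0 : ℝ) 1) ∧ support φ ⊆ V := by
  obtain ⟨φ, h0, h1, h01⟩ := exists_continuous_zero_one_of_isClosed hV.isClosed_compl
    isClosed_singleton (disjoint_singleton_right.2 (not_not.2 hx))
  exact ⟨φ, h1 rfl, h01, fun y hy => by_contra fun hyV => hy (h0 hyV)⟩

theorem exists_bumps_pairwiseDisjoint {X : Type*} [TopologicalSpace X] [T2Space X]
    [NormalSpace X] (s : Finset X) {T : Set X} (hT : IsClosed T) (hsT : Disjoint (s : Set X) T) :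
    ∃ φ : X → C(X, ℝ), (∀ x ∈ s, φ x x = 1 ∧ (∀ y, φ x y ∈ Icc (0 : ℝ) 1) ∧ EqOn (φ x) 0 T) ∧
      (s : Set X).PairwiseDisjoint fun x => support (φ x) := by
  obtain ⟨U, hU, hUdisj⟩ := s.finite_toSet.t2_separation
  have hbump : ∀ x, ∃ φ : C(X, ℝ), x ∈ s →
      φ x = 1 ∧ (∀ y, φ y ∈ Icc (0 : ℝ) 1) ∧ support φ ⊆ U x ∩ Tᶜ := by
    intro x
    by_cases hx : x ∈ s
    · obtain ⟨φ, hφ⟩ := exists_bump_support_subset ((hU x).2.inter hT.isOpen_compl)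
        ⟨(hU x).1, hsT.notMem_of_mem_left hx⟩
      exact ⟨φ, fun _ => hφ⟩
    · exact ⟨0, fun h => absurd h hx⟩
  choose φ hφ using hbump
  refine ⟨φ, fun x hx => ⟨(hφ x hx).1, (hφ x hx).2.1, fun y hy => ?_⟩, fun x hx y hy hxy => ?_⟩
  · exact notMem_support.1 fun h => ((hφ x hx).2.2 h).2 hy
  · exact (hUdisj hx hy hxy).mono ((hφ x hx).2.2.trans inter_subset_left)
      ((hφ y hy).2.2.trans inter_subset_left)

namespace ContinuousMap

variable {X : Type*} [TopologicalSpace X] [CompactSpace X]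

theorem exists_norm_apply_eq_norm {E : Type*} [NormedAddCommGroup E] [Nonempty X]
    (f : C(X, E)) : ∃ x, ‖f x‖ = ‖f‖ := by
  obtain ⟨x, -, hx⟩ := isCompact_univ.exists_isMaxOn univ_nonempty
    (continuous_norm.comp f.continuous).continuousOn
  exact ⟨x, le_antisymm (f.norm_coe_le_norm x)
    ((f.norm_le (norm_nonneg _)).2 fun y => hx (mem_univ y))⟩

theorem norm_sum_le_of_pairwiseDisjoint_support {E ι : Type*} [NormedAddCommGroup E]
    (s : Finset ι) (g : ι → C(X, E)) {C : ℝ} (hC : 0 ≤ C) (hg : ∀ i ∈ s, ‖g i‖ ≤ C)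
    (hdisj : (s : Set ι).PairwiseDisjoint fun i => support (g i)) : ‖∑ i ∈ s, g i‖ ≤ C := by
  refine (norm_le _ hC).2 fun x => ?_
  rw [sum_apply]
  by_cases hx : ∃ i ∈ s, g i x ≠ 0
  · obtain ⟨i, hi, hix⟩ := hx
    rw [Finset.sum_eq_single_of_mem i hi fun j hj hji => ?_]
    · exact ((g i).norm_coe_le_norm x).trans (hg i hi)
    · by_contra hjx
      exact disjoint_left.1 (hdisj hj hi hji) hjx hix
  · push Not at hx
    rw [Finset.sum_eq_zero hx, norm_zero]
    exact hC

theorem norm_add_mul_sub_le_one {φ x y : C(X, ℝ)} (hφ : ∀ t, φ t ∈ Icc (0 : ℝ) 1)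
    (hx : ‖x‖ ≤ 1) (hy : ‖y‖ ≤ 1) : ‖x + φ * (y - x)‖ ≤ 1 := by
  refine (norm_le _ zero_le_one).2 fun t => ?_
  have hmem := convex_closedBall (0 : ℝ) 1
    (mem_closedBall_zero_iff.2 ((x.norm_coe_le_norm t).trans hx))
    (mem_closedBall_zero_iff.2 ((y.norm_coe_le_norm t).trans hy))
    (sub_nonneg.2 (hφ t).2) (hφ t).1 (sub_add_cancel 1 (φ t))
  rw [mem_closedBall_zero_iff, smul_eq_mul, smul_eq_mul] at hmem
  rwa [show (x + φ * (y - x)) t = (1 - φ t) * x t + φ t * y t by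
    simp only [add_apply, mul_apply, sub_apply]; ring]

theorem norm_add_eq_two_of_apply_eq {x y : C(X, ℝ)} (hx : ‖x‖ ≤ 1) (hy : ‖y‖ ≤ 1) {t : X}
    (hyt : |y t| = 1) (hxt : x t = y t) : ‖y + x‖ = 2 := by
  refine le_antisymm ((norm_add_le y x).trans (by linarith)) ?_
  have := (y + x).norm_coe_le_norm t
  rwa [add_apply, hxt, ← two_mul, norm_mul, Real.norm_two, Real.norm_eq_abs, hyt, mul_one]
    at this

end ContinuousMap

open ContinuousMap

section

variable {K : Type u} [TopologicalSpace K] [CompactSpace K]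

theorem infinite_setOf_abs_eq_one [T1Space K] (hK : ∀ x : K, ¬IsGδ ({x} : Set K))
    {y : C(K, ℝ)} (hy : ‖y‖ = 1) : {t | |y t| = 1}.Infinite := by
  have : Nonempty K := by
    by_contra h
    rw [not_nonempty_iff] at h
    have : y = 0 := ext fun t => isEmptyElim t
    simp [this] at hy
  refine (isClosed_singleton.isGδ.preimage (continuous_abs.comp y.continuous)
    : IsGδ {t | |y t| = 1}).infinite_of_forall_not_isGδ_singleton hK ?_
  obtain ⟨t, ht⟩ := y.exists_norm_apply_eq_norm
  exact ⟨t, by rwa [hy, Real.norm_eq_abs] at ht⟩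

variable [T2Space K]

theorem exists_near_eqOn_and_apply_eq (f : C(K, ℝ) →L[ℝ] ℝ) {x₀ y : C(K, ℝ)} (hx₀ : ‖x₀‖ ≤ 1)
    (hy : ‖y‖ ≤ 1) {P T : Set K} (hP : P.Infinite) (hT : T.Finite) {ε : ℝ} (hε : 0 < ε) :
    ∃ t ∈ P, ∃ x : C(K, ℝ), ‖x‖ ≤ 1 ∧ |f x - f x₀| < ε ∧ EqOn x x₀ T ∧ x t = y t := by
  obtain ⟨N, hN⟩ := exists_nat_gt (‖f‖ * 2 / ε)
  have hN0 : (0 : ℝ) < N := (by positivity : (0 : ℝ) ≤ ‖f‖ * 2 / ε).trans_lt hN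
  obtain ⟨s, hsPT, hsN⟩ := (hP.sdiff hT).exists_subset_card_eq N
  have hs : s.Nonempty := Finset.card_pos.1 (by rw [hsN]; exact_mod_cast hN0)
  obtain ⟨φ, hφ, hφdisj⟩ := exists_bumps_pairwiseDisjoint s hT.isClosed
    (disjoint_sdiff_left.mono_left hsPT)
  set g : K → C(K, ℝ) := fun t => φ t * (y - x₀)
  have hg : ∀ δ : K → ℝ, (∀ t, |δ t| = 1) → ‖∑ t ∈ s, δ t • g t‖ ≤ 2 := by
    intro δ hδ
    refine norm_sum_le_of_pairwiseDisjoint_support s _ zero_le_two (fun t ht => ?_) ?_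
    · have hφt : ‖φ t‖ ≤ 1 := (norm_le _ zero_le_one).2 fun u => by
        rw [Real.norm_eq_abs, abs_of_nonneg ((hφ t ht).2.1 u).1]
        exact ((hφ t ht).2.1 u).2
      calc ‖δ t • g t‖ = ‖g t‖ := by rw [norm_smul, Real.norm_eq_abs, hδ, one_mul]
        _ ≤ ‖φ t‖ * ‖y - x₀‖ := norm_mul_le _ _
        _ ≤ 1 * 2 := by gcongr; exact (norm_sub_le y x₀).trans (by linarith)
        _ = 2 := one_mul 2
    · refine hφdisj.mono fun t => ?_
      rw [coe_smul, coe_mul]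
      exact (support_const_smul_subset _ _).trans (support_mul_subset_left _ _)
  obtain ⟨t, hts, hft⟩ := exists_abs_apply_le_mul_div_card f hs g hg
  refine ⟨t, (hsPT hts).1, x₀ + g t, norm_add_mul_sub_le_one (hφ t hts).2.1 hx₀ hy, ?_, ?_, ?_⟩
  · rw [map_add, add_sub_cancel_left]
    refine hft.trans_lt ?_
    rw [hsN, div_lt_iff₀ hN0]
    rw [div_lt_iff₀ hε] at hN
    linarith
  · intro u hu
    simp [g, (hφ t hts).2.2 hu]
  · simp [g, (hφ t hts).1]

theorem exists_apply_eq_at_peak_points (hK : ∀ x : K, ¬IsGδ ({x} : Set K))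
    (f : C(K, ℝ) →L[ℝ] ℝ) {c : ℝ} {x₀ : C(K, ℝ)} (hx₀ : ‖x₀‖ ≤ 1) (hc : c < f x₀)
    (Y : Finset C(K, ℝ)) (hY : ∀ y ∈ Y, ‖y‖ = 1) :
    ∃ x : C(K, ℝ), ‖x‖ ≤ 1 ∧ c < f x ∧
      ∃ T : Finset K, ∀ y ∈ Y, ∃ t ∈ T, |y t| = 1 ∧ x t = y t := by
  classical
  induction Y using Finset.induction_on with
  | empty => exact ⟨x₀, hx₀, hc, ∅, by simp⟩
  | insert y Y _ ih =>
    obtain ⟨x, hx, hcx, T, hT⟩ := ih fun y' hy' => hY y' (Finset.mem_insert_of_mem hy')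
    have hy := hY y (Finset.mem_insert_self y Y)
    obtain ⟨t, hyt, x', hx', hfx', hx'T, hx't⟩ := exists_near_eqOn_and_apply_eq f hx hy.le
      (infinite_setOf_abs_eq_one hK hy) T.finite_toSet (sub_pos.2 hcx)
    refine ⟨x', hx', by linarith [(abs_lt.1 hfx').1], insert t T, fun y' hy' => ?_⟩
    rcases Finset.mem_insert.1 hy' with rfl | hy'
    · exact ⟨t, Finset.mem_insert_self t T, hyt, hx't⟩
    · obtain ⟨t', ht', hyt', hxt'⟩ := hT y' hy'
      exact ⟨t', Finset.mem_insert_of_mem ht', hyt', (hx'T ht').trans hxt'⟩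

theorem hasKPerfectDaugavet_of_lt_aleph0 (hK : ∀ x : K, ¬IsGδ ({x} : Set K)) {κ : Cardinal.{u}}
    (hκ : κ < Cardinal.aleph0) : HasKPerfectDaugavet C(K, ℝ) κ := by
  intro Y hYκ hY f a ha
  have hfin : Y.Finite := Cardinal.lt_aleph0_iff_set_finite.1 (hYκ.trans_lt hκ)
  obtain ⟨x₀, hx₀, hfx₀⟩ := ballSlice_nonempty f ha
  obtain ⟨x, hx, hfx, T, hT⟩ :=
    exists_apply_eq_at_peak_points hK f hx₀ hfx₀ hfin.toFinset fun y hy => hY y (hfin.mem_toFinset.1 hy)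
  refine ⟨x, ⟨hx, hfx⟩, fun y hy => ?_⟩
  obtain ⟨t, -, hyt, hxt⟩ := hT y (hfin.mem_toFinset.2 hy)
  exact norm_add_eq_two_of_apply_eq hx (hY y hy).le hyt hxt

theorem not_isGδ_singleton_of_hasKPerfectDaugavet_one (H : HasKPerfectDaugavet C(K, ℝ) 1)
    (x₀ : K) : ¬IsGδ ({x₀} : Set K) := by
  intro hx₀
  have : Nonempty K := ⟨x₀⟩
  obtain ⟨y, hy1, -, -, hy01⟩ := exists_continuous_one_zero_of_isCompact_of_isGδ
    isCompact_singleton hx₀ isClosed_empty (disjoint_empty _)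
  have hyx₀ : y x₀ = 1 := (hy1.subset rfl : x₀ ∈ y ⁻¹' {1})
  have hyn : ‖y‖ = 1 := le_antisymm
    ((norm_le _ zero_le_one).2 fun t => by
      rw [Real.norm_eq_abs, abs_of_nonneg (hy01 t).1]; exact (hy01 t).2)
    (by simpa [hyx₀] using y.norm_coe_le_norm x₀)
  -- the slice `{x | x x₀ < 1}` of `-δ_{x₀}`
  set f : C(K, ℝ) →L[ℝ] ℝ := -evalCLM ℝ x₀
  obtain ⟨x, ⟨hx, hfx⟩, h2⟩ := H {y} (by simp) (by simpa using hyn) f (‖f‖ + 1) (by positivity)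
  have hxx₀ : x x₀ < 1 := by
    simp only [f, _root_.neg_apply, evalCLM_apply] at hfx
    linarith
  obtain ⟨t, ht⟩ := (y + x).exists_norm_apply_eq_norm
  rw [h2 y rfl, ContinuousMap.add_apply, Real.norm_eq_abs] at ht
  have hxt := abs_le.1 ((Real.norm_eq_abs _).symm.trans_le ((x.norm_coe_le_norm t).trans hx))
  have hsum : y t + x t = 2 := by
    rcases (abs_eq zero_le_two).1 ht with h | h
    · exact h
    · linarith [(hy01 t).1]
  have hyt : y t = 1 := by linarith [(hy01 t).2]
  have htx₀ : t = x₀ := by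
    rw [← mem_singleton_iff, hy1]
    exact hyt
  subst htx₀
  linarith

end

/-- `C(K)` has the perfect Daugavet property if and only if the compact Hausdorff space
`K` has no `G_δ`-points; moreover, in that case `C(K)` has the `n`-perfect Daugavet
property for every natural number `n`. -/
theorem ck_perfectDaugavet_iff_no_Gdelta (K : Type u) [TopologicalSpace K]
    [CompactSpace K] [T2Space K] :
    (HasKPerfectDaugavet C(K, ℝ) 1 ↔ ∀ x : K, ¬ IsGδ ({x} : Set K)) ∧
      ((∀ x : K, ¬ IsGδ ({x} : Set K)) →
        ∀ n : ℕ, HasKPerfectDaugavet C(K, ℝ) (n : Cardinal.{u})) := by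
  have hfinite : (∀ x : K, ¬IsGδ ({x} : Set K)) → ∀ n : ℕ, HasKPerfectDaugavet C(K, ℝ) n :=
    fun hK n => hasKPerfectDaugavet_of_lt_aleph0 hK Cardinal.natCast_lt_aleph0
  exact ⟨⟨not_isGδ_singleton_of_hasKPerfectDaugavet_one, fun hK => by
    simpa using hfinite hK 1⟩, hfinite⟩
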